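/- arXiv:2308.16137 — 2 statements merged into one kernel-verified Lean document; each statement's English description precedes it below -/
import Mathlib

section
/- Let n ≥ 1 and w : Fin n → ℝ, and let p i = exp(w i) / (∑_{j} exp(w j)) be the softmax distribution. Then the Shannon entropy of p satisfies −∑_{i} p i · ln (p i) ≥ ln n − ((max_i w i) − (min_i w i)). (This is the bound established in the proof of the Attention Entropy Explosion proposition: the entropy is at least −max_i w i + ln(n · exp(min_i w i)).) -/
open Real Finset

/-- **Softmax entropy lower bound via logit range.** For `n ≥ 1` logits `w i` and the softmax
distribution `p i = exp (w i) / ∑ j, exp (w j)`, the Shannon entropy is at least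
`ln n - (max_i w i - min_i w i)`. -/
theorem softmax_entropy_ge_log_sub_range (n : ℕ) (hn : 1 ≤ n) (w : Fin n → ℝ)
    (p : Fin n → ℝ) (hp : ∀ i, p i = Real.exp (w i) / ∑ j, Real.exp (w j)) :
    -∑ i, p i * Real.log (p i) ≥
      Real.log n -
        (Finset.univ.sup' ⟨⟨0, hn⟩, Finset.mem_univ _⟩ w -
          Finset.univ.inf' ⟨⟨0, hn⟩, Finset.mem_univ _⟩ w) := by
  have hne : (Finset.univ : Finset (Fin n)).Nonempty := ⟨⟨0, hn⟩, Finset.mem_univ _⟩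
  set S : ℝ := ∑ j, Real.exp (w j) with hSdef
  have hS : 0 < S := Finset.sum_pos (fun i _ => Real.exp_pos _) hne
  set M := Finset.univ.sup' hne w with hM
  set m := Finset.univ.inf' hne w with hm
  have hsum1 : ∑ i, p i = 1 := by
    simp only [hp]
    rw [← Finset.sum_div, ← hSdef, div_self hS.ne']
  have hplog : ∀ i, p i * Real.log (p i) = p i * (w i - Real.log S) := by
    intro i
    rw [hp i, Real.log_div (Real.exp_pos _).ne' hS.ne', Real.log_exp]
  have h1 : ∑ i, p i * Real.log (p i) = (∑ i, p i * w i) - Real.log S := by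
    calc ∑ i, p i * Real.log (p i) = ∑ i, (p i * w i - p i * Real.log S) := by
          refine Finset.sum_congr rfl fun i _ => ?_
          rw [hplog i]; ring
      _ = (∑ i, p i * w i) - (∑ i, p i) * Real.log S := by
          rw [Finset.sum_sub_distrib, Finset.sum_mul]
      _ = (∑ i, p i * w i) - Real.log S := by rw [hsum1, one_mul]
  have hpw : ∑ i, p i * w i ≤ M := by
    calc ∑ i, p i * w i ≤ ∑ i, p i * M := by
          refine Finset.sum_le_sum fun i _ => ?_
          have hpi : 0 ≤ p i := by
            rw [hp i]; positivity
          exact mul_le_mul_of_nonneg_left (Finset.le_sup' w (Finset.mem_univ i)) hpi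
      _ = M := by rw [← Finset.sum_mul, hsum1, one_mul]
  have hlogS : Real.log n + m ≤ Real.log S := by
    have hSge : (n : ℝ) * Real.exp m ≤ S := by
      calc (n : ℝ) * Real.exp m = ∑ _i : Fin n, Real.exp m := by
            simp [Finset.sum_const, Finset.card_univ]
        _ ≤ S := Finset.sum_le_sum fun i _ =>
            Real.exp_le_exp.2 (Finset.inf'_le w (Finset.mem_univ i))
    have hn0 : (0:ℝ) < n := by exact_mod_cast hn
    calc Real.log n + m = Real.log ((n : ℝ) * Real.exp m) := by
          rw [Real.log_mul hn0.ne' (Real.exp_pos _).ne', Real.log_exp]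
      _ ≤ Real.log S := Real.log_le_log (by positivity) hSge
  rw [h1]
  linarith
end

section
/- (Pseudo-dimension of a family inside a finite-dimensional function space.) Let X be a set and let V be a real vector subspace of the space of functions X → ℝ with finite dimension k. If H ⊆ V, then H does not pseudo-shatter any finite set of cardinality k + 1; hence dim_P(H) ≤ k. -/
/-- A family `H` of real-valued functions on `X` pseudo-shatters a finite set `S` if there is a
threshold `t : X → ℝ` such that every subset `T ⊆ S` is realized by some `h ∈ H` via
`h x > t x ↔ x ∈ T` on `S`. -/
def PseudoShatters {X : Type*} (H : Set (X → ℝ)) (S : Finset X) : Prop :=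
  ∃ t : X → ℝ, ∀ T ⊆ S, ∃ h ∈ H, ∀ x ∈ S, (t x < h x ↔ x ∈ T)

/-- **Pseudo-dimension inside a finite-dimensional function space.** If `H` is contained in a
`k`-dimensional subspace `V` of `X → ℝ`, then `H` pseudo-shatters no finite set of cardinality
`k + 1`; hence its pseudo-dimension is at most `k`. -/
theorem pseudodim_le_finrank {X : Type*} (k : ℕ) (V : Submodule ℝ (X → ℝ))
    (hfin : FiniteDimensional ℝ V) (hV : Module.finrank ℝ V = k)
    (H : Set (X → ℝ)) (hH : ∀ h ∈ H, h ∈ V) :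
    (∀ S : Finset X, S.card = k + 1 → ¬ PseudoShatters H S) ∧
    (∀ S : Finset X, PseudoShatters H S → S.card ≤ k) := by
  classical
  have key : ∀ S : Finset X, S.card = k + 1 → ¬ PseudoShatters H S := by
    rintro S hcard ⟨t, hsh⟩
    -- evaluation functionals on V at points of S
    set g : S → Module.Dual ℝ V := fun x => (LinearMap.proj (x : X)).comp V.subtype with hg
    have hdual : Module.finrank ℝ (Module.Dual ℝ V) = k := by
      rw [Subspace.dual_finrank_eq, hV]
    have hnli : ¬ LinearIndependent ℝ g := by
      intro hli
      have hle := hli.fintype_card_le_finrank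
      rw [Fintype.card_coe, hcard, hdual] at hle
      omega
    obtain ⟨c, hsum, x₀, hx₀⟩ := Fintype.not_linearIndependent_iff.mp hnli
    have hzero : ∀ v ∈ V, ∑ x : S, c x * v x = 0 := by
      intro v hv
      have := congrArg (fun φ : Module.Dual ℝ V => φ ⟨v, hv⟩) hsum
      simpa [g, LinearMap.sum_apply, mul_comm] using this
    set T : Finset X := S.filter (fun x => 0 < if h : x ∈ S then c ⟨x, h⟩ else 0) with hT
    set T' : Finset X := S.filter (fun x => (if h : x ∈ S then c ⟨x, h⟩ else 0) < 0) with hT'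
    obtain ⟨h, hhH, hh⟩ := hsh T (Finset.filter_subset _ _)
    obtain ⟨h', hh'H, hh'⟩ := hsh T' (Finset.filter_subset _ _)
    have memT : ∀ x : S, ((x : X) ∈ T ↔ 0 < c x) := by
      intro x; simp [hT, x.2]
    have memT' : ∀ x : S, ((x : X) ∈ T' ↔ c x < 0) := by
      intro x; simp [hT', x.2]
    have le1 : ∀ x : S, c x * t x ≤ c x * h x := by
      intro x
      rcases lt_trichotomy (c x) 0 with hc | hc | hc
      · have : ¬ ((x : X) ∈ T) := by rw [memT]; linarith
        have hx := (hh x x.2).not.mpr this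
        push_neg at hx
        exact mul_le_mul_of_nonpos_left hx hc.le
      · simp [hc]
      · have hx := (hh x x.2).mpr ((memT x).mpr hc)
        exact mul_le_mul_of_nonneg_left hx.le hc.le
    have le2 : ∀ x : S, c x * h' x ≤ c x * t x := by
      intro x
      rcases lt_trichotomy (c x) 0 with hc | hc | hc
      · have hx := (hh' x x.2).mpr ((memT' x).mpr hc)
        exact (mul_lt_mul_of_neg_left hx hc).le
      · simp [hc]
      · have : ¬ ((x : X) ∈ T') := by rw [memT']; linarith
        have hx := (hh' x x.2).not.mpr this
        push_neg at hx
        exact mul_le_mul_of_nonneg_left hx hc.le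
    have hzh : ∑ x : S, c x * h x = 0 := hzero h (hH h hhH)
    have hzh' : ∑ x : S, c x * h' x = 0 := hzero h' (hH h' hh'H)
    have hA1 : ∑ x : S, c x * t x ≤ 0 := by
      rw [← hzh]; exact Finset.sum_le_sum fun x _ => le1 x
    have hA2 : (0 : ℝ) ≤ ∑ x : S, c x * t x := by
      rw [← hzh']; exact Finset.sum_le_sum fun x _ => le2 x
    rcases hx₀.lt_or_gt with hc | hc
    · -- c x₀ < 0 : the h' inequality is strict
      have hx := (hh' x₀ x₀.2).mpr ((memT' x₀).mpr hc)
      have : ∑ x : S, c x * h' x < ∑ x : S, c x * t x :=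
        Finset.sum_lt_sum (fun x _ => le2 x)
          ⟨x₀, Finset.mem_univ _, mul_lt_mul_of_neg_left hx hc⟩
      rw [hzh'] at this
      linarith
    · -- 0 < c x₀ : the h inequality is strict
      have hx := (hh x₀ x₀.2).mpr ((memT x₀).mpr hc)
      have : ∑ x : S, c x * t x < ∑ x : S, c x * h x :=
        Finset.sum_lt_sum (fun x _ => le1 x)
          ⟨x₀, Finset.mem_univ _, mul_lt_mul_of_pos_left hx hc⟩
      rw [hzh] at this
      linarith
  refine ⟨key, ?_⟩
  intro S hS
  by_contra hcard
  push_neg at hcard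
  obtain ⟨S', hS'S, hS'card⟩ := Finset.exists_subset_card_eq (by omega : k + 1 ≤ S.card)
  obtain ⟨t, hsh⟩ := hS
  exact key S' hS'card ⟨t, fun T hT => by
    obtain ⟨h, hhH, hh⟩ := hsh T (hT.trans hS'S)
    exact ⟨h, hhH, fun x hx => hh x (hS'S hx)⟩⟩
end
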